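/- arXiv:cs/0405021 — 8 statements merged into one kernel-verified Lean document; each statement's English description precedes it below -/
import Mathlib

section
/- Let G be a finite simple graph with n vertices. Then G admits a proper 3-coloring if and only if the graph G × K₃ admits a proper 3-coloring (I₁, I₂, I₃) whose three color classes satisfy #I₁ = #I₂ = #I₃ = n. -/
open Finset

/-- `I₁, …, I_k` is a partition of the (finite) type `V`: the classes are pairwise
disjoint and they cover `V`. -/
def IsPartitionFam {V : Type*} {k : ℕ} (I : Fin k → Finset V) : Prop :=
  (∀ i j, i ≠ j → Disjoint (I i) (I j)) ∧ ∀ v, ∃ j, v ∈ I j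

/-- The family of classes `I₁, …, I_k` is a proper coloring of `H`: no class contains
two adjacent vertices. -/
def ProperFam {V : Type*} (H : SimpleGraph V) {k : ℕ} (I : Fin k → Finset V) : Prop :=
  ∀ j, ∀ u ∈ I j, ∀ v ∈ I j, ¬ H.Adj u v

/-!
Color `(v, i)` by `c v + i ∈ ℤ/3`, where `c` is a proper 3-coloring of `G`. Along a copy of `G`
the shift `i` is constant, and along a triangle `{v} × K₃` the colors run through all of `ℤ/3`,
so this coloring is proper; and the class of color `j` meets every triangle `{v} × K₃` exactly
once (in `i = j - c v`), so it has `n` elements. Conversely, `G` is the layer `G × {0}` of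
`G × K₃`.
-/

namespace SimpleGraph

variable {V α : Type*} {G : SimpleGraph V}

theorem colorable_of_isPartitionFam_of_properFam {k : ℕ} {I : Fin k → Finset V}
    (hI : IsPartitionFam I) (hG : ProperFam G I) : G.Colorable k := by
  choose c hc using hI.2
  refine ⟨Coloring.mk c fun {v w} hvw hcvw => hG (c v) v (hc v) w ?_ hvw⟩
  exact hcvw ▸ hc w

section ColorClasses

variable [Fintype V] {k : ℕ} (C : G.Coloring (Fin k))

theorem Coloring.isPartitionFam_colorClasses :
    IsPartitionFam fun j => ({v | C v = j} : Finset V) :=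
  ⟨fun i j hij => disjoint_filter.mpr fun _ _ hi hj => hij (hi ▸ hj), fun v => ⟨C v, by simp⟩⟩

theorem Coloring.properFam_colorClasses : ProperFam G fun j => ({v | C v = j} : Finset V) := by
  intro j v hv w hw hvw
  simp only [mem_filter, mem_univ, true_and] at hv hw
  exact C.valid hvw (hv.trans hw.symm)

end ColorClasses

theorem exists_isPartitionFam_properFam_iff_colorable [Fintype V] {k : ℕ} :
    (∃ I : Fin k → Finset V, IsPartitionFam I ∧ ProperFam G I) ↔ G.Colorable k :=
  ⟨fun ⟨_, hI, hG⟩ => colorable_of_isPartitionFam_of_properFam hI hG,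
    fun ⟨C⟩ => ⟨_, C.isPartitionFam_colorClasses, C.properFam_colorClasses⟩⟩

def Coloring.boxProdComplete [AddGroup α] (C : G.Coloring α) :
    (G □ completeGraph α).Coloring α :=
  Coloring.mk (fun p => C p.1 + p.2) fun {p q} hpq => by
    rcases boxProd_adj.mp hpq with ⟨hG, hsnd⟩ | ⟨hK, hfst⟩
    · rw [hsnd]
      exact fun h => C.valid hG (add_right_cancel h)
    · rw [hfst]
      exact fun h => hK (add_left_cancel h)

@[simp]
theorem Coloring.boxProdComplete_apply [AddGroup α] (C : G.Coloring α) (p : V × α) :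
    C.boxProdComplete p = C p.1 + p.2 :=
  rfl

theorem Coloring.card_colorClass_boxProdComplete [Fintype V] [Fintype α] [AddGroup α]
    [DecidableEq α] (C : G.Coloring α) (j : α) :
    ({p | C.boxProdComplete p = j} : Finset (V × α)).card = Fintype.card V := by
  rw [← card_univ]
  refine card_nbij' Prod.fst (fun v => (v, -C v + j)) (fun _ _ => mem_coe.mpr (mem_univ _))
    (fun v _ => ?_) (fun p hp => ?_) (fun _ _ => rfl)
  · rw [mem_coe, mem_filter]
    simp
  · rw [mem_coe, mem_filter] at hp
    simp [← hp.2]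

end SimpleGraph

open SimpleGraph

/-- A finite simple graph `G` with `n` vertices admits a proper
3-coloring iff the box product `G □ K₃` admits a proper 3-coloring all of whose three
color classes have cardinality `n`. -/
theorem stmt_0 {V : Type*} [Fintype V] (G : SimpleGraph V) (n : ℕ)
    (hn : Fintype.card V = n) :
    (∃ I : Fin 3 → Finset V, IsPartitionFam I ∧ ProperFam G I) ↔
      ∃ I : Fin 3 → Finset (V × Fin 3),
        IsPartitionFam I ∧ ProperFam (G.boxProd (SimpleGraph.completeGraph (Fin 3))) I ∧
          ∀ j, (I j).card = n := by
  rw [exists_isPartitionFam_properFam_iff_colorable]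
  constructor
  · rintro ⟨C⟩
    exact ⟨_, C.boxProdComplete.isPartitionFam_colorClasses,
      C.boxProdComplete.properFam_colorClasses,
      fun j => hn ▸ C.card_colorClass_boxProdComplete j⟩
  · rintro ⟨J, hJ, hJG, -⟩
    exact (colorable_of_isPartitionFam_of_properFam hJ hJG).of_hom (boxProdLeft G _ 0).toHom
end

section
/- Let G be a finite simple graph with n ≥ 1 vertices and let H = G × K₃, a graph on 3n vertices. Then for every partition I = (I₁, …, I_k) of the vertex set of H, writing a_j = #I_j, one has Béz(A(H); I₁, …, I_k) ≥ B(a₁, …, a_k). -/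
open Finset

open Classical in
/-- The support `A(H)` of a graph `H`: the exponent vectors `e_{v₁} + ⋯ + e_{v_s}`
(indicator vectors) of the cliques `{v₁, …, v_s}` of `H` of size `s ≤ 3`. -/
noncomputable def graphSupport {V : Type*} [Fintype V] (H : SimpleGraph V) :
    Finset (V → ℕ) :=
  ((Finset.univ : Finset (Finset V)).filter
      (fun T : Finset V => T.card ≤ 3 ∧ H.IsClique (T : Set V))).image
    (fun T v => if v ∈ T then 1 else 0)

/-- The multi-homogeneous Bézout number of a support `A` with respect to the family
of groups of variables `I₁, …, I_k`, namely `(m!/(a₁!⋯a_k!)) · ∏_j d_j ^ a_j` where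
`a_j = #I_j` and `d_j = max_{α ∈ A} ∑_{l ∈ I_j} α_l`. -/
noncomputable def bez {V : Type*} [Fintype V] (A : Finset (V → ℕ))
    {k : ℕ} (I : Fin k → Finset V) : ℕ :=
  Nat.multinomial Finset.univ (fun j => (I j).card) *
    ∏ j, (A.sup fun α => ∑ l ∈ I j, α l) ^ (I j).card

/-- The minimal multi-homogeneous Bézout number of a support `A`, over all partitions
of the set of variables. -/
noncomputable def minBez {V : Type*} [Fintype V] (A : Finset (V → ℕ)) : ℕ :=
  sInf {b : ℕ | ∃ (k : ℕ) (I : Fin k → Finset V), IsPartitionFam I ∧ bez A I = b}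

open Classical in
/-- The `l`-fold cartesian product `A^l` of a support `A ⊆ ℕ^V`: the concatenations
`(α⁽¹⁾, …, α⁽ˡ⁾)` of members of `A`, indexed by `Fin l × V`. -/
noncomputable def powSupport {V : Type*} [Fintype V] (A : Finset (V → ℕ)) (l : ℕ) :
    Finset (Fin l × V → ℕ) :=
  (Fintype.piFinset (fun _ : Fin l => A)).image (fun f p => f p.1 p.2)

/-!
Bound each factor of `bez` separately. A class `S` of `a` vertices of `G □ K₃` meets `n` fibres
`{v} × K₃`, so by pigeonhole one fibre contains at least `⌈a/n⌉` of its vertices. A fibre is a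
clique of `G □ K₃` with at most three vertices, so its indicator vector lies in `A(G □ K₃)` and
witnesses `d_S ≥ ⌈a/n⌉`.
-/

theorem exists_ceilDiv_card_le_card_fiber {ι α : Type*} [Fintype α] [DecidableEq α]
    (f : ι → α) {s : Finset ι} (hs : s.Nonempty) :
    ∃ y, #s ⌈/⌉ Fintype.card α ≤ #{x ∈ s | f x = y} := by
  obtain ⟨x, hx⟩ := hs
  have hα : 0 < Fintype.card α := Fintype.card_pos_iff.mpr ⟨f x⟩
  have hpos : 0 < #s ⌈/⌉ Fintype.card α := by
    by_contra! h0
    have := (ceilDiv_le_iff_le_mul hα).mp h0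
    have := card_pos.mpr ⟨x, hx⟩
    omega
  have hlt : Fintype.card α * (#s ⌈/⌉ Fintype.card α - 1) < #s := by
    by_contra! hle
    have := (ceilDiv_le_iff_le_mul hα).mpr hle
    omega
  obtain ⟨y, -, hy⟩ := exists_lt_card_fiber_of_mul_lt_card_of_maps_to
    (fun a _ => mem_univ (f a)) (by simpa using hlt)
  exact ⟨y, by omega⟩

theorem SimpleGraph.isClique_boxProd_completeGraph_of_fst_eq {V β : Type*} (G : SimpleGraph V)
    {s : Set (V × β)} (v : V) (hs : ∀ p ∈ s, p.1 = v) :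
    (G □ completeGraph β).IsClique s := by
  intro p hp q hq hpq
  have hfst : p.1 = q.1 := (hs p hp).trans (hs q hq).symm
  exact boxProd_adj.mpr <| Or.inr ⟨fun h => hpq (Prod.ext hfst h), hfst⟩

theorem card_le_sup_graphSupport {V : Type*} [Fintype V] [DecidableEq V] (H : SimpleGraph V)
    {S T : Finset V} (hTS : T ⊆ S) (hT : H.IsClique (T : Set V)) (hT3 : #T ≤ 3) :
    #T ≤ (graphSupport H).sup fun α => ∑ l ∈ S, α l := by
  have hmem : (fun v => if v ∈ T then 1 else 0) ∈ graphSupport H := by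
    simp only [graphSupport, mem_image, mem_filter, mem_univ, true_and]
    exact ⟨T, ⟨hT3, hT⟩, by convert rfl⟩
  calc #T = ∑ l ∈ S, if l ∈ T then 1 else 0 := by
        rw [sum_ite_mem, inter_eq_right.mpr hTS, card_eq_sum_ones]
    _ ≤ _ := le_sup (f := fun α => ∑ l ∈ S, α l) hmem

theorem ceilDiv_card_le_sup_graphSupport_boxProd {V : Type*} [Fintype V] [DecidableEq V]
    (G : SimpleGraph V) (S : Finset (V × Fin 3)) :
    #S ⌈/⌉ Fintype.card V ≤
      (graphSupport (G □ SimpleGraph.completeGraph (Fin 3))).sup fun α => ∑ l ∈ S, α l := by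
  obtain rfl | hS := S.eq_empty_or_nonempty
  · simp
  obtain ⟨v, hv⟩ := exists_ceilDiv_card_le_card_fiber Prod.fst hS
  have hfibre3 : #{p ∈ S | p.1 = v} ≤ 3 :=
    calc #{p ∈ S | p.1 = v} ≤ #(univ : Finset (Fin 3)) :=
          card_le_card_of_injOn Prod.snd (fun _ _ => mem_univ _) fun p hp q hq h =>
            Prod.ext ((mem_filter.mp hp).2.trans (mem_filter.mp hq).2.symm) h
      _ = 3 := by simp
  refine hv.trans <| card_le_sup_graphSupport _ (filter_subset _ S) ?_ hfibre3
  exact G.isClique_boxProd_completeGraph_of_fst_eq v fun p hp => (mem_filter.mp hp).2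

theorem stmt_3_general {V : Type*} [Fintype V] (G : SimpleGraph V) (n : ℕ)
    (hn : Fintype.card V = n)
    (k : ℕ) (I : Fin k → Finset (V × Fin 3)) :
    Nat.multinomial Finset.univ (fun j => (I j).card) *
        ∏ j, ((I j).card ⌈/⌉ n) ^ (I j).card ≤
      bez (graphSupport (G.boxProd (SimpleGraph.completeGraph (Fin 3)))) I := by
  classical
  subst hn
  unfold bez
  gcongr with j
  exact ceilDiv_card_le_sup_graphSupport_boxProd G (I j)

/-- For `H = G □ K₃` with `|G| = n ≥ 1` and any partition
`I = (I₁, …, I_k)` of the vertices of `H`, writing `a_j = #I_j`, one has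
`Béz(A(H); I) ≥ B(a) = ((3n)!/(a₁!⋯a_k!)) · ∏_j ⌈a_j/n⌉ ^ a_j`. -/
theorem stmt_3 {V : Type*} [Fintype V] (G : SimpleGraph V) (n : ℕ)
    (hn : Fintype.card V = n) (hn1 : 1 ≤ n)
    (k : ℕ) (I : Fin k → Finset (V × Fin 3)) (hI : IsPartitionFam I) :
    Nat.multinomial Finset.univ (fun j => (I j).card) *
        ∏ j, ((I j).card ⌈/⌉ n) ^ (I j).card ≤
      bez (graphSupport (G.boxProd (SimpleGraph.completeGraph (Fin 3)))) I :=
  stmt_3_general G n hn k I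
end

section
/- Let n ≥ 1 and k ≥ 1 be integers and let a₁ ≥ a₂ ≥ ⋯ ≥ a_k ≥ 1 be integers with Σ_{j=1}^k a_j = 3n. If it is not the case that k = 3 and a₁ = a₂ = a₃ = n, then 3 · B(a₁, …, a_k) ≥ 4 · B(n, n, n), where B(n, n, n) = (3n)!/(n!)³. -/
/-!
Clearing the multinomial coefficient, the claim becomes `4 ∏ aⱼ! ≤ 3 (n!)³ ∏ cⱼ ^ aⱼ` with
`cⱼ = ⌈aⱼ/n⌉`. Raising it to the `n`-th power and writing `(n!)^(3n) = ∏ (n!)^aⱼ`, it splits into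
part-wise bounds `(m!)ⁿ ≤ (n!)ᵐ c^(mn)` for `c = ⌈m/n⌉`, which gain a factor `(4/3)ⁿ` as soon as
`m ≠ n`; some part differs from `n` unless `a = (n, n, n)`.
For `m < n` the gain comes from `2ᵐ m! ≤ (m+1)ᵐ`. For `(c-1)n < m ≤ cn` one descends from
`m = cn`, where the bound is the multinomial estimate `4 (cn)! ≤ 3 c^(cn) (n!)^c`; lowering `m`
by one costs the factor `n! cⁿ / (m+1)ⁿ ≤ 1`.
-/

open Finset Nat

namespace Nat

theorem two_pow_mul_factorial_le_succ_pow (m : ℕ) : 2 ^ m * m ! ≤ (m + 1) ^ m := by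
  induction m with
  | zero => simp
  | succ m ih =>
    have bernoulli : (m + 1) ^ (m + 1) + (m + 1) * (m + 1) ^ m * 1 ≤ (m + 1 + 1) ^ (m + 1) := by
      simpa using pow_add_mul_le_add_pow (a := m + 1) (b := 1) (zero_le _) (zero_le _) (m + 1)
    calc 2 ^ (m + 1) * (m + 1)! = 2 * (m + 1) * (2 ^ m * m !) := by
          rw [factorial_succ]; ring
      _ ≤ 2 * (m + 1) * (m + 1) ^ m := by gcongr
      _ = (m + 1) ^ (m + 1) + (m + 1) * (m + 1) ^ m * 1 := by ring
      _ ≤ (m + 1 + 1) ^ (m + 1) := bernoulli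

theorem factorial_pow_mul_two_pow_le (m t : ℕ) : m ! ^ (m + t) * 2 ^ (m * t) ≤ (m + t)! ^ m :=
  calc m ! ^ (m + t) * 2 ^ (m * t) = m ! ^ m * (2 ^ m * m !) ^ t := by ring
    _ ≤ m ! ^ m * ((m + 1) ^ m) ^ t := by gcongr; exact two_pow_mul_factorial_le_succ_pow m
    _ = (m ! * (m + 1) ^ t) ^ m := by ring
    _ ≤ (m + t)! ^ m := by gcongr; exact factorial_mul_pow_le_factorial

theorem four_pow_mul_factorial_pow_le_of_lt {m n : ℕ} (hm : 1 ≤ m) (hmn : m < n) :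
    4 ^ n * m ! ^ n ≤ 3 ^ n * n ! ^ m := by
  obtain ⟨t, rfl⟩ : ∃ t, n = m + t := ⟨n - m, by omega⟩
  -- `2 ^ (m t) ≥ 2 ^ (n - 1)`, and `2 ^ (n - 1) ≥ (4 / 3) ^ n` once `n ≥ 2`
  have hmt : m + t ≤ m * t + 1 := by nlinarith
  have hsix : 2 * 4 ^ (m + t) ≤ 6 ^ (m + t) := by
    obtain ⟨s, hs⟩ : ∃ s, m + t = s + 2 := ⟨m + t - 2, by omega⟩
    have : 4 ^ s ≤ 6 ^ s := Nat.pow_le_pow_left (by norm_num) s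
    rw [hs, pow_add, pow_add]; omega
  refine Nat.le_of_mul_le_mul_left ?_ (show 0 < 2 by norm_num)
  calc 2 * (4 ^ (m + t) * m ! ^ (m + t)) ≤ 6 ^ (m + t) * m ! ^ (m + t) := by
        rw [← mul_assoc]; gcongr
    _ = 3 ^ (m + t) * 2 ^ (m + t) * m ! ^ (m + t) := by rw [show 6 = 3 * 2 by rfl, mul_pow]
    _ ≤ 3 ^ (m + t) * 2 ^ (m * t + 1) * m ! ^ (m + t) := by gcongr; norm_num
    _ = 2 * (3 ^ (m + t) * (m ! ^ (m + t) * 2 ^ (m * t))) := by ring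
    _ ≤ 2 * (3 ^ (m + t) * (m + t)! ^ m) := by gcongr; exact factorial_pow_mul_two_pow_le m t

theorem factorial_add_le (a c : ℕ) : (a + c)! ≤ a ! * (a + c) ^ c := by
  rw [← factorial_mul_ascFactorial]
  exact Nat.mul_le_mul_left _ (ascFactorial_le_pow_add a c)

theorem four_mul_factorial_le_three_mul_pow_self {c : ℕ} (hc : 2 ≤ c) : 4 * c ! ≤ 3 * c ^ c := by
  induction c, hc using Nat.le_induction with
  | base => decide
  | succ c hc ih =>
    calc 4 * (c + 1)! = (c + 1) * (4 * c !) := by rw [factorial_succ]; ring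
      _ ≤ (c + 1) * (3 * (c + 1) ^ c) := Nat.mul_le_mul_left _ (ih.trans (by gcongr; omega))
      _ = 3 * (c + 1) ^ (c + 1) := by ring

theorem four_mul_factorial_mul_le {c n : ℕ} (hc : 2 ≤ c) (hn : 1 ≤ n) :
    4 * (c * n)! ≤ 3 * c ^ (c * n) * n ! ^ c := by
  induction n, hn using Nat.le_induction with
  | base => simpa using four_mul_factorial_le_three_mul_pow_self hc
  | succ n hn ih =>
    calc 4 * (c * (n + 1))! ≤ 4 * ((c * n)! * (c * (n + 1)) ^ c) := by
          rw [mul_add_one]; gcongr; exact factorial_add_le _ _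
      _ = 4 * (c * n)! * (c ^ c * (n + 1) ^ c) := by rw [← mul_pow]; ring
      _ ≤ 3 * c ^ (c * n) * n ! ^ c * (c ^ c * (n + 1) ^ c) := by gcongr
      _ = 3 * c ^ (c * (n + 1)) * (n + 1)! ^ c := by rw [factorial_succ, mul_pow]; ring

theorem factorial_mul_succ_pow_le {b : ℕ} (hb : 1 ≤ b) (n : ℕ) :
    n ! * (b + 1) ^ n ≤ (b * n + 1) ^ n := by
  rcases Nat.eq_zero_or_pos n with rfl | hn
  · simp
  refine Nat.le_of_mul_le_mul_left ?_ (pow_pos (show 0 < 2 by norm_num) n)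
  calc 2 ^ n * (n ! * (b + 1) ^ n) = (2 ^ n * n !) * (b + 1) ^ n := by ring
    _ ≤ (n + 1) ^ n * (b + 1) ^ n := by gcongr; exact two_pow_mul_factorial_le_succ_pow n
    _ = ((n + 1) * (b + 1)) ^ n := (mul_pow _ _ _).symm
    _ ≤ (2 * (b * n + 1)) ^ n := Nat.pow_le_pow_left (by nlinarith) n
    _ = 2 ^ n * (b * n + 1) ^ n := mul_pow _ _ _

theorem four_pow_mul_factorial_pow_le_of_mul_lt {b m n : ℕ} (hb : 1 ≤ b) (hn : 1 ≤ n)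
    (hlo : b * n < m) (hhi : m ≤ (b + 1) * n) :
    4 ^ n * m ! ^ n ≤ 3 ^ n * (n ! ^ m * (b + 1) ^ (m * n)) := by
  refine Nat.decreasingInduction'
    (P := fun k => 4 ^ n * k ! ^ n ≤ 3 ^ n * (n ! ^ k * (b + 1) ^ (k * n)))
    (fun k _ hmk ih => ?_) hhi ?_
  · refine Nat.le_of_mul_le_mul_right ?_ (pow_pos (succ_pos k) n)
    calc 4 ^ n * k ! ^ n * (k + 1) ^ n = 4 ^ n * (k + 1)! ^ n := by
          rw [factorial_succ, mul_pow]; ring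
      _ ≤ 3 ^ n * (n ! ^ (k + 1) * (b + 1) ^ ((k + 1) * n)) := ih
      _ = 3 ^ n * (n ! ^ k * (b + 1) ^ (k * n)) * (n ! * (b + 1) ^ n) := by ring
      _ ≤ 3 ^ n * (n ! ^ k * (b + 1) ^ (k * n)) * (k + 1) ^ n := by
          gcongr
          exact (factorial_mul_succ_pow_le hb n).trans (by gcongr; omega)
  · calc 4 ^ n * ((b + 1) * n)! ^ n = (4 * ((b + 1) * n)!) ^ n := (mul_pow _ _ _).symm
      _ ≤ (3 * (b + 1) ^ ((b + 1) * n) * n ! ^ (b + 1)) ^ n :=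
          Nat.pow_le_pow_left (four_mul_factorial_mul_le (by omega) hn) n
      _ = 3 ^ n * (n ! ^ ((b + 1) * n) * (b + 1) ^ ((b + 1) * n * n)) := by
          rw [mul_pow, mul_pow, ← pow_mul, ← pow_mul]; ring

theorem ceilDiv_eq_one_of_le {m n : ℕ} (hm : 1 ≤ m) (hmn : m ≤ n) : m ⌈/⌉ n = 1 := by
  rw [ceilDiv_eq_add_pred_div]
  exact Nat.div_eq_of_lt_le (by omega) (by omega)

theorem four_pow_mul_factorial_pow_le {m n : ℕ} (hn : 1 ≤ n) (hm : 1 ≤ m) (hmn : m ≠ n) :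
    4 ^ n * m ! ^ n ≤ 3 ^ n * (n ! ^ m * (m ⌈/⌉ n) ^ (m * n)) := by
  rcases hmn.lt_or_gt with hlt | hgt
  · simpa [ceilDiv_eq_one_of_le hm hlt.le] using four_pow_mul_factorial_pow_le_of_lt hm hlt
  · have hceil : ∀ x, m ⌈/⌉ n ≤ x ↔ m ≤ n * x := fun x => ceilDiv_le_iff_le_mul hn
    have hup : m ≤ n * (m ⌈/⌉ n) := (hceil _).1 le_rfl
    have hc : 1 < m ⌈/⌉ n := by
      by_contra! h
      have := (hceil 1).1 h
      omega
    obtain ⟨b, hb⟩ : ∃ b, m ⌈/⌉ n = b + 1 := ⟨_, (Nat.sub_add_cancel hc.le).symm⟩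
    rw [hb] at hup hc ⊢
    refine four_pow_mul_factorial_pow_le_of_mul_lt (by omega) hn ?_ (by linarith)
    by_contra! h
    have := (hceil b).2 (by linarith)
    omega

theorem factorial_pow_le {m n : ℕ} (hn : 1 ≤ n) : m ! ^ n ≤ n ! ^ m * (m ⌈/⌉ n) ^ (m * n) := by
  rcases Nat.eq_zero_or_pos m with rfl | hm
  · simp
  rcases eq_or_ne m n with rfl | hmn
  · simp [ceilDiv_eq_one_of_le hm le_rfl]
  refine Nat.le_of_mul_le_mul_left ?_ (pow_pos (show 0 < 3 by norm_num) n)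
  calc 3 ^ n * m ! ^ n ≤ 4 ^ n * m ! ^ n := by gcongr; norm_num
    _ ≤ 3 ^ n * (n ! ^ m * (m ⌈/⌉ n) ^ (m * n)) := four_pow_mul_factorial_pow_le hn hm hmn

end Nat

theorem four_mul_prod_factorial_le {ι : Type*} [Fintype ι] {a : ι → ℕ} {n q : ℕ} (hn : 1 ≤ n)
    (hsum : ∑ j, a j = q * n) {j₀ : ι} (hj₀ : 1 ≤ a j₀) (hne : a j₀ ≠ n) :
    4 * ∏ j, (a j)! ≤ 3 * (n ! ^ q * ∏ j, (a j ⌈/⌉ n) ^ a j) := by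
  classical
  let bound j := n ! ^ a j * (a j ⌈/⌉ n) ^ (a j * n)
  rw [← Nat.pow_le_pow_iff_left (show n ≠ 0 by omega)]
  calc (4 * ∏ j, (a j)!) ^ n
      = 4 ^ n * (a j₀)! ^ n * ∏ j ∈ univ.erase j₀, (a j)! ^ n := by
        rw [mul_pow, ← prod_pow, ← mul_prod_erase _ _ (mem_univ j₀), mul_assoc]
    _ ≤ 3 ^ n * bound j₀ * ∏ j ∈ univ.erase j₀, bound j :=
        Nat.mul_le_mul (Nat.four_pow_mul_factorial_pow_le hn hj₀ hne)
          (prod_le_prod' fun j _ => Nat.factorial_pow_le hn)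
    _ = 3 ^ n * ∏ j, bound j := by rw [mul_assoc, mul_prod_erase _ _ (mem_univ j₀)]
    _ = (3 * (n ! ^ q * ∏ j, (a j ⌈/⌉ n) ^ a j)) ^ n := by
        simp only [bound, prod_mul_distrib, prod_pow_eq_pow_sum, hsum, pow_mul, prod_pow, mul_pow]

theorem stmt_4_general (n k : ℕ) (hn : 1 ≤ n) (a : Fin k → ℕ)
    (ha : ∀ j, 1 ≤ a j)
    (hsum : ∑ j, a j = 3 * n)
    (hne : ¬ (k = 3 ∧ ∀ j, a j = n)) :
    4 * ((3 * n).factorial / n.factorial ^ 3) ≤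
      3 * (Nat.multinomial Finset.univ a * ∏ j, (a j ⌈/⌉ n) ^ a j) := by
  obtain ⟨j₀, hj₀⟩ : ∃ j, a j ≠ n := by
    by_contra! hall
    have hk : k * n = 3 * n := by simpa [hall] using hsum
    exact hne ⟨Nat.eq_of_mul_eq_mul_right hn hk, hall⟩
  have hspec : (∏ j, (a j)!) * Nat.multinomial univ a = (3 * n)! := hsum ▸ Nat.multinomial_spec _ _
  have hkey := four_mul_prod_factorial_le hn hsum (ha j₀) hj₀
  refine (Nat.mul_div_le_mul_div_assoc _ _ _).trans (Nat.div_le_of_le_mul ?_)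
  calc 4 * (3 * n)! = Nat.multinomial univ a * (4 * ∏ j, (a j)!) := by rw [← hspec]; ring
    _ ≤ Nat.multinomial univ a * (3 * (n ! ^ 3 * ∏ j, (a j ⌈/⌉ n) ^ a j)) := by gcongr
    _ = n ! ^ 3 * (3 * (Nat.multinomial univ a * ∏ j, (a j ⌈/⌉ n) ^ a j)) := by ring

/-- If `n, k ≥ 1` and `a₁ ≥ a₂ ≥ ⋯ ≥ a_k ≥ 1` with `∑ a_j = 3n`, then
either `k = 3` and `a₁ = a₂ = a₃ = n`, or `3 · B(a) ≥ 4 · B(n,n,n)`, where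
`B(a) = ((3n)!/(a₁!⋯a_k!)) · ∏_j ⌈a_j/n⌉ ^ a_j` and `B(n,n,n) = (3n)!/(n!)³`. -/
theorem stmt_4 (n k : ℕ) (hn : 1 ≤ n) (hk : 1 ≤ k) (a : Fin k → ℕ)
    (ha : ∀ j, 1 ≤ a j) (hanti : ∀ i j : Fin k, i ≤ j → a j ≤ a i)
    (hsum : ∑ j, a j = 3 * n)
    (hne : ¬ (k = 3 ∧ ∀ j, a j = n)) :
    4 * ((3 * n).factorial / n.factorial ^ 3) ≤
      3 * (Nat.multinomial Finset.univ a * ∏ j, (a j ⌈/⌉ n) ^ a j) :=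
  stmt_4_general n k hn a ha hsum hne
end

section
/- For every integer n ≥ 1, one has the real inequality 3^{3n} · (n!)³ ≥ (2π/√3) · e^{-1/36} · n · (3n)!. -/
open Real Filter Topology Stirling Nat

/-!
The ratio `a n = 3^(3n) (n!)³ / (n (3n)!)` decreases for `n ≥ 1`, since
`a (n+1) / a n = 9n(n+1) / ((3n+1)(3n+2)) < 1`. By Stirling's formula it tends to `2π/√3`,
so `a n ≥ 2π/√3 ≥ (2π/√3) e^(-1/36)` for every `n ≥ 1`.
-/

noncomputable def factorialCubeRatio (n : ℕ) : ℝ :=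
  3 ^ (3 * n) * (n ! : ℝ) ^ 3 / (n * (3 * n)! : ℝ)

lemma factorialCubeRatio_nonneg (n : ℕ) : 0 ≤ factorialCubeRatio n := by
  unfold factorialCubeRatio
  positivity

lemma factorialCubeRatio_succ {n : ℕ} (hn : n ≠ 0) :
    factorialCubeRatio (n + 1) =
      factorialCubeRatio n * (9 * n * (n + 1) / ((3 * n + 1) * (3 * n + 2))) := by
  have hn' : (0 : ℝ) < n := by positivity
  have h3n : 3 * (n + 1) = (3 * n + 2) + 1 := by ring
  unfold factorialCubeRatio
  rw [h3n, factorial_succ, factorial_succ, factorial_succ, factorial_succ, pow_succ,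
    pow_succ, pow_succ, pow_succ]
  push_cast
  field_simp
  ring

lemma factorialCubeRatio_succ_le {n : ℕ} (hn : n ≠ 0) :
    factorialCubeRatio (n + 1) ≤ factorialCubeRatio n := by
  rw [factorialCubeRatio_succ hn]
  refine mul_le_of_le_one_right (factorialCubeRatio_nonneg n) ?_
  rw [div_le_one (by positivity)]
  nlinarith

lemma factorialCubeRatio_eq_stirlingSeq {n : ℕ} (hn : n ≠ 0) :
    factorialCubeRatio n = 2 / √3 * stirlingSeq n ^ 3 / stirlingSeq (3 * n) := by
  have hn' : (0 : ℝ) < n := by positivity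
  have hsqrt : √(2 * (3 * n : ℝ)) = √3 * √(2 * n) := by
    rw [← sqrt_mul (by norm_num)]
    ring_nf
  have hpow : (3 * n / exp 1 : ℝ) ^ (3 * n) = 3 ^ (3 * n) * ((n / exp 1) ^ n) ^ 3 := by
    rw [mul_div_assoc, mul_pow, ← pow_mul, mul_comm n 3]
  unfold factorialCubeRatio stirlingSeq
  push_cast
  rw [hsqrt, hpow]
  field_simp
  rw [sq_sqrt (by positivity)]

lemma tendsto_factorialCubeRatio :
    Tendsto factorialCubeRatio atTop (𝓝 (2 * π / √3)) := by
  have hpi : 0 < √π := sqrt_pos.mpr pi_pos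
  have h3n : Tendsto (fun n : ℕ => stirlingSeq (3 * n)) atTop (𝓝 √π) :=
    tendsto_stirlingSeq_sqrt_pi.comp (tendsto_id.const_mul_atTop' (by norm_num))
  have hlim : 2 / √3 * √π ^ 3 / √π = 2 * π / √3 := by
    rw [pow_succ, sq_sqrt pi_pos.le]
    field_simp
  rw [← hlim]
  refine Tendsto.congr' ?_
    (((tendsto_stirlingSeq_sqrt_pi.pow 3).const_mul _).div h3n hpi.ne')
  filter_upwards [eventually_ne_atTop 0] with n hn
  exact (factorialCubeRatio_eq_stirlingSeq hn).symm

lemma two_pi_div_sqrt_three_le_factorialCubeRatio {n : ℕ} (hn : n ≠ 0) :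
    2 * π / √3 ≤ factorialCubeRatio n := by
  obtain ⟨m, rfl⟩ := exists_eq_succ_of_ne_zero hn
  have hanti : Antitone fun m => factorialCubeRatio (m + 1) :=
    antitone_nat_of_succ_le fun m => factorialCubeRatio_succ_le m.succ_ne_zero
  exact hanti.le_of_tendsto ((tendsto_add_atTop_iff_nat 1).2 tendsto_factorialCubeRatio) m

theorem stmt_5_general (n : ℕ) :
    (2 * π / Real.sqrt 3) * Real.exp (-(1 / 36)) * (n : ℝ) * ((3 * n).factorial : ℝ) ≤
      (3 : ℝ) ^ (3 * n) * ((n.factorial : ℝ)) ^ 3 := by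
  rcases eq_or_ne n 0 with rfl | hn
  · simp
  have hden : (0 : ℝ) < n * (3 * n)! := by positivity
  have hratio : 2 * π / √3 * (n * (3 * n)!) ≤ 3 ^ (3 * n) * (n ! : ℝ) ^ 3 :=
    (le_div_iff₀ hden).1 (two_pi_div_sqrt_three_le_factorialCubeRatio hn)
  have hexp : exp (-(1 / 36)) ≤ 1 := exp_le_one_iff.mpr (by norm_num)
  calc 2 * π / √3 * exp (-(1 / 36)) * n * (3 * n)!
      = exp (-(1 / 36)) * (2 * π / √3 * (n * (3 * n)!)) := by ring
    _ ≤ 1 * (2 * π / √3 * (n * (3 * n)!)) := by gcongr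
    _ ≤ 3 ^ (3 * n) * (n ! : ℝ) ^ 3 := by rw [one_mul]; exact hratio

/-- For every integer `n ≥ 1`,
`3^(3n) · (n!)³ ≥ (2π/√3) · e^(-1/36) · n · (3n)!` as real numbers. -/
theorem stmt_5 (n : ℕ) (hn : 1 ≤ n) :
    (2 * π / Real.sqrt 3) * Real.exp (-(1 / 36)) * (n : ℝ) * ((3 * n).factorial : ℝ) ≤
      (3 : ℝ) ^ (3 * n) * ((n.factorial : ℝ)) ^ 3 :=
  stmt_5_general n
end

section
/- For all integers n ≥ 1 and a, b ≥ 1 with a + b = 3n, one has the real inequality ((3n)!/(a! · b!)) · ⌈a/n⌉^a · ⌈b/n⌉^b ≥ (2/3) · √(2π) · e^{-1/6} · (3n)!/(n!)³, where ⌈·⌉ is the ceiling. -/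
open Real

private lemma sqrtpi_le_stirling {m : ℕ} (hm : 1 ≤ m) :
    Real.sqrt π ≤ Stirling.stirlingSeq m := by
  obtain ⟨k, rfl⟩ := Nat.exists_eq_add_of_le hm
  have ht : Filter.Tendsto (Stirling.stirlingSeq ∘ Nat.succ) Filter.atTop
      (nhds (Real.sqrt π)) :=
    Stirling.tendsto_stirlingSeq_sqrt_pi.comp (Filter.tendsto_add_atTop_nat 1)
  simpa [Nat.add_comm, Function.comp, Nat.succ_eq_add_one] using
    (Stirling.stirlingSeq'_antitone.le_of_tendsto ht k)

private lemma stirling_le_one {m : ℕ} (hm : 1 ≤ m) :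
    Stirling.stirlingSeq m ≤ Real.exp 1 / Real.sqrt 2 := by
  obtain ⟨k, rfl⟩ := Nat.exists_eq_add_of_le hm
  have h := Stirling.stirlingSeq'_antitone (Nat.zero_le k)
  simpa [Stirling.stirlingSeq_one, Function.comp, Nat.succ_eq_add_one,
    Nat.add_comm] using h

private lemma fact_lower {m : ℕ} (hm : 1 ≤ m) :
    Real.sqrt (2 * π * m) * ((m : ℝ) / Real.exp 1) ^ m ≤ (m.factorial : ℝ) := by
  have hm0 : (0 : ℝ) < m := by exact_mod_cast hm
  have hD : 0 < Real.sqrt (2 * m) * ((m : ℝ) / Real.exp 1) ^ m := by positivity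
  have h := sqrtpi_le_stirling hm
  rw [Stirling.stirlingSeq, le_div_iff₀ hD] at h
  calc Real.sqrt (2 * π * m) * ((m : ℝ) / Real.exp 1) ^ m
      = Real.sqrt π * (Real.sqrt (2 * m) * ((m : ℝ) / Real.exp 1) ^ m) := by
        rw [show (2 * π * (m : ℝ)) = π * (2 * m) by ring, Real.sqrt_mul pi_pos.le]
        ring
    _ ≤ _ := h

private lemma fact_upper {m : ℕ} (hm : 1 ≤ m) :
    (m.factorial : ℝ) ≤ Real.exp 1 * Real.sqrt m * ((m : ℝ) / Real.exp 1) ^ m := by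
  have hm0 : (0 : ℝ) < m := by exact_mod_cast hm
  have hD : 0 < Real.sqrt (2 * m) * ((m : ℝ) / Real.exp 1) ^ m := by positivity
  have h := stirling_le_one hm
  rw [Stirling.stirlingSeq, div_le_iff₀ hD] at h
  have h2 : Real.sqrt 2 ≠ 0 := by positivity
  calc (m.factorial : ℝ)
      ≤ Real.exp 1 / Real.sqrt 2 * (Real.sqrt (2 * m) * ((m : ℝ) / Real.exp 1) ^ m) := h
    _ = Real.exp 1 * Real.sqrt m * ((m : ℝ) / Real.exp 1) ^ m := by
        rw [Real.sqrt_mul (by norm_num : (0:ℝ) ≤ 2)]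
        field_simp

private lemma exp_116_le : Real.exp (11 / 6 : ℝ) ≤ 2 * π := by
  have h1 : Real.exp (11 / 6 : ℝ) ^ (6 : ℕ) = Real.exp 1 ^ (11 : ℕ) := by
    rw [← Real.exp_nat_mul, ← Real.exp_nat_mul]
    norm_num
  have h2 : Real.exp 1 ^ (11 : ℕ) ≤ (2.7182818286 : ℝ) ^ (11 : ℕ) :=
    pow_le_pow_left₀ (Real.exp_pos 1).le Real.exp_one_lt_d9.le 11
  have h3 : ((2.7182818286 : ℝ)) ^ (11 : ℕ) ≤ (2 * 3.141592 : ℝ) ^ (6 : ℕ) := by norm_num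
  have h4 : (2 * 3.141592 : ℝ) ^ (6 : ℕ) ≤ (2 * π) ^ (6 : ℕ) :=
    pow_le_pow_left₀ (by norm_num) (by nlinarith [Real.pi_gt_d6]) 6
  have h5 : Real.exp (11 / 6 : ℝ) ^ (6 : ℕ) ≤ (2 * π) ^ (6 : ℕ) := by
    rw [h1]; exact h2.trans (h3.trans h4)
  exact le_of_pow_le_pow_left₀ (by norm_num) (by positivity) h5

/-- For integers `n, a, b ≥ 1` with `a + b = 3n`,
`((3n)!/(a!·b!)) · ⌈a/n⌉^a · ⌈b/n⌉^b ≥ (2/3) · √(2π) · e^(-1/6) · (3n)!/(n!)³`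
as real numbers. -/
theorem stmt_6 (n a b : ℕ) (hn : 1 ≤ n) (ha : 1 ≤ a) (hb : 1 ≤ b)
    (hab : a + b = 3 * n) :
    (2 / 3) * Real.sqrt (2 * π) * Real.exp (-(1 / 6)) *
        (((3 * n).factorial : ℝ) / ((n.factorial : ℝ)) ^ 3) ≤
      (((3 * n).factorial : ℝ) / ((a.factorial : ℝ) * (b.factorial : ℝ))) *
        ((⌈(a : ℝ) / (n : ℝ)⌉ : ℝ)) ^ a * ((⌈(b : ℝ) / (n : ℝ)⌉ : ℝ)) ^ b := by
  have hE : (0 : ℝ) < Real.exp 1 := Real.exp_pos 1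
  have hn0 : (0 : ℝ) < n := by exact_mod_cast hn
  have hn1 : (1 : ℝ) ≤ n := by exact_mod_cast hn
  have ha0 : (0 : ℝ) < a := by exact_mod_cast ha
  have hb0 : (0 : ℝ) < b := by exact_mod_cast hb
  have habR : (a : ℝ) + b = 3 * n := by exact_mod_cast hab
  set C : ℝ := 2 / 3 * Real.sqrt (2 * π) * Real.exp (-(1 / 6)) with hC
  have hC0 : 0 < C := by
    rw [hC]; positivity
  set E : ℝ := Real.exp 1 with hEdef
  -- core numeric inequality
  have core : C * E ^ 2 * (Real.sqrt a * Real.sqrt b) ≤ 2 * π * n * Real.sqrt (2 * π * n) := by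
    have hsab : Real.sqrt a * Real.sqrt b ≤ 3 * n / 2 := by
      rw [← Real.sqrt_mul ha0.le]
      have h1 : (a : ℝ) * b ≤ (3 * n / 2) ^ 2 := by nlinarith [sq_nonneg ((a : ℝ) - b)]
      calc Real.sqrt ((a : ℝ) * b) ≤ Real.sqrt ((3 * n / 2) ^ 2) := Real.sqrt_le_sqrt h1
        _ = 3 * n / 2 := Real.sqrt_sq (by positivity)
    have hCe : C * E ^ 2 = 2 / 3 * Real.sqrt (2 * π) * Real.exp (11 / 6 : ℝ) := by
      have h : Real.exp (-(1 / 6)) * E ^ 2 = Real.exp (11 / 6 : ℝ) := by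
        rw [hEdef, ← Real.exp_nat_mul, ← Real.exp_add]
        norm_num
      rw [hC, mul_assoc, h, mul_assoc]
    have hsq : Real.sqrt (2 * π) ≤ Real.sqrt (2 * π * n) :=
      Real.sqrt_le_sqrt (by nlinarith [Real.pi_pos])
    calc C * E ^ 2 * (Real.sqrt a * Real.sqrt b)
        ≤ C * E ^ 2 * (3 * n / 2) :=
          mul_le_mul_of_nonneg_left hsab (by positivity)
      _ = Real.sqrt (2 * π) * Real.exp (11 / 6 : ℝ) * n := by rw [hCe]; ring
      _ ≤ Real.sqrt (2 * π * n) * (2 * π) * n := by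
          have := exp_116_le
          have h1 : Real.sqrt (2 * π) * Real.exp (11 / 6 : ℝ) ≤ Real.sqrt (2 * π * n) * (2 * π) :=
            mul_le_mul hsq this (Real.exp_pos _).le (Real.sqrt_nonneg _)
          exact mul_le_mul_of_nonneg_right h1 hn0.le
      _ = 2 * π * n * Real.sqrt (2 * π * n) := by ring
  -- key polynomial inequality
  have hfa := fact_upper ha
  have hfb := fact_upper hb
  have hfn := fact_lower hn
  have key2 : C * ((a.factorial : ℝ) * (b.factorial : ℝ) * (n : ℝ) ^ (3 * n)) ≤
      (a : ℝ) ^ a * (b : ℝ) ^ b * ((n.factorial : ℝ)) ^ 3 := by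
    have hEab : E ^ (3 * n) = E ^ a * E ^ b := by rw [← hab, pow_add]
    have step1 : C * ((a.factorial : ℝ) * (b.factorial : ℝ) * (n : ℝ) ^ (3 * n)) ≤
        C * ((E * Real.sqrt a * ((a : ℝ) / E) ^ a) * (E * Real.sqrt b * ((b : ℝ) / E) ^ b) *
          (n : ℝ) ^ (3 * n)) := by
      have h := mul_le_mul hfa hfb (by positivity) (by positivity)
      have h2 := mul_le_mul_of_nonneg_right h (by positivity :
        (0 : ℝ) ≤ (n : ℝ) ^ (3 * n))
      exact mul_le_mul_of_nonneg_left h2 hC0.le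
    have step4 : (a : ℝ) ^ a * (b : ℝ) ^ b * (Real.sqrt (2 * π * n) * ((n : ℝ) / E) ^ n) ^ 3 ≤
        (a : ℝ) ^ a * (b : ℝ) ^ b * ((n.factorial : ℝ)) ^ 3 := by
      have h := pow_le_pow_left₀ (by positivity) hfn 3
      exact mul_le_mul_of_nonneg_left h (by positivity)
    refine step1.trans (le_trans ?_ step4)
    have lhs_eq : C * ((E * Real.sqrt a * ((a : ℝ) / E) ^ a) *
          (E * Real.sqrt b * ((b : ℝ) / E) ^ b) * (n : ℝ) ^ (3 * n)) =
        (C * E ^ 2 * (Real.sqrt a * Real.sqrt b)) *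
          ((a : ℝ) ^ a * (b : ℝ) ^ b * (n : ℝ) ^ (3 * n)) / E ^ (3 * n) := by
      rw [hEab]
      simp only [div_pow]
      field_simp
    have rhs_eq : (a : ℝ) ^ a * (b : ℝ) ^ b * (Real.sqrt (2 * π * n) * ((n : ℝ) / E) ^ n) ^ 3 =
        (2 * π * n * Real.sqrt (2 * π * n)) *
          ((a : ℝ) ^ a * (b : ℝ) ^ b * (n : ℝ) ^ (3 * n)) / E ^ (3 * n) := by
      have h3 : (Real.sqrt (2 * π * (n : ℝ))) ^ 3 = 2 * π * n * Real.sqrt (2 * π * n) := by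
        rw [pow_succ, Real.sq_sqrt (by positivity)]
      rw [mul_pow, h3, ← pow_mul, show n * 3 = 3 * n from mul_comm n 3, div_pow]
      field_simp
    rw [lhs_eq, rhs_eq]
    have hQ : (0 : ℝ) ≤ (a : ℝ) ^ a * (b : ℝ) ^ b * (n : ℝ) ^ (3 * n) := by positivity
    have hE3 : (0 : ℝ) < E ^ (3 * n) := by positivity
    exact div_le_div_of_nonneg_right (mul_le_mul_of_nonneg_right core hQ) hE3.le
  -- assemble
  have hF : (0 : ℝ) < ((3 * n).factorial : ℝ) := by
    exact_mod_cast Nat.factorial_pos (3 * n)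
  have hFa : (0 : ℝ) < (a.factorial : ℝ) := by exact_mod_cast Nat.factorial_pos a
  have hFb : (0 : ℝ) < (b.factorial : ℝ) := by exact_mod_cast Nat.factorial_pos b
  have hFn : (0 : ℝ) < (n.factorial : ℝ) := by exact_mod_cast Nat.factorial_pos n
  have key : C * (((3 * n).factorial : ℝ) / ((n.factorial : ℝ)) ^ 3) ≤
      (((3 * n).factorial : ℝ) / ((a.factorial : ℝ) * (b.factorial : ℝ))) *
        ((a : ℝ) / n) ^ a * ((b : ℝ) / n) ^ b := by
    have hprod : ((a : ℝ) / n) ^ a * ((b : ℝ) / n) ^ b =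
        ((a : ℝ) ^ a * (b : ℝ) ^ b) / (n : ℝ) ^ (3 * n) := by
      rw [div_pow, div_pow, div_mul_div_comm, ← pow_add, hab]
    have hrw : (((3 * n).factorial : ℝ) / ((a.factorial : ℝ) * (b.factorial : ℝ))) *
          ((a : ℝ) / n) ^ a * ((b : ℝ) / n) ^ b =
        ((3 * n).factorial : ℝ) * ((a : ℝ) ^ a * (b : ℝ) ^ b) /
          (((a.factorial : ℝ) * (b.factorial : ℝ)) * (n : ℝ) ^ (3 * n)) := by
      rw [mul_assoc, hprod, div_mul_div_comm]
    have hlw : C * (((3 * n).factorial : ℝ) / ((n.factorial : ℝ)) ^ 3) =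
        C * ((3 * n).factorial : ℝ) / ((n.factorial : ℝ)) ^ 3 := by ring
    rw [hrw, hlw, div_le_div_iff₀ (by positivity) (by positivity)]
    have h := mul_le_mul_of_nonneg_left key2 hF.le
    nlinarith [h]
  have hca : (a : ℝ) / n ≤ ((⌈(a : ℝ) / (n : ℝ)⌉ : ℤ) : ℝ) := Int.le_ceil _
  have hcb : (b : ℝ) / n ≤ ((⌈(b : ℝ) / (n : ℝ)⌉ : ℤ) : ℝ) := Int.le_ceil _
  have hca' : ((a : ℝ) / n) ^ a ≤ ((⌈(a : ℝ) / (n : ℝ)⌉ : ℤ) : ℝ) ^ a :=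
    pow_le_pow_left₀ (by positivity) hca a
  have hcb' : ((b : ℝ) / n) ^ b ≤ ((⌈(b : ℝ) / (n : ℝ)⌉ : ℤ) : ℝ) ^ b :=
    pow_le_pow_left₀ (by positivity) hcb b
  refine key.trans ?_
  have h1 : (((3 * n).factorial : ℝ) / ((a.factorial : ℝ) * (b.factorial : ℝ))) *
        ((a : ℝ) / n) ^ a ≤
      (((3 * n).factorial : ℝ) / ((a.factorial : ℝ) * (b.factorial : ℝ))) *
        ((⌈(a : ℝ) / (n : ℝ)⌉ : ℤ) : ℝ) ^ a :=
    mul_le_mul_of_nonneg_left hca' (by positivity)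
  have h2 := mul_le_mul h1 hcb' (by positivity) (by positivity)
  exact h2
end

section
/- Let n, x ≥ 1 be integers with 4x ≤ 3n and with (n, x) not among the six exceptional pairs (2,1), (3,2), (4,3), (6,4), (7,5), (8,6). Then n^x · e^{-1/(12x)} > √(2π) · x^x · √x, as real numbers. -/
/-!
Squaring both sides and using `e^(-t) ≥ 1 - t` reduces the claim to
`12π x^(2x+2) < (6x - 1) n^(2x)`, which by `π < 3.15` follows from the integer inequality
`378 x^(2x+2) + 10 n^(2x) < 60 x n^(2x)`. For `x ≥ 7` the hypothesis `3n ≥ 4x` gives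
`n^(2x) ≥ (16/9)^x x^(2x) ≥ 7x · x^(2x)`, which suffices; for `x ≤ 6` the admissible `n`
are `n ≥ x + 2` (or `n ≥ x + 3` once `x ≥ 4`) and the inequality is checked directly.
-/

open Real

def exceptionalPairs : Finset (ℕ × ℕ) := {(2, 1), (3, 2), (4, 3), (6, 4), (7, 5), (8, 6)}

theorem seven_mul_nine_pow_mul_le_sixteen_pow {x : ℕ} (hx : 7 ≤ x) : 7 * 9 ^ x * x ≤ 16 ^ x := by
  induction x, hx using Nat.le_induction with
  | base => norm_num
  | succ k hk ih =>
    calc 7 * 9 ^ (k + 1) * (k + 1) = 9 * (k + 1) * (7 * 9 ^ k) := by ring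
      _ ≤ 16 * k * (7 * 9 ^ k) := Nat.mul_le_mul_right _ (by omega)
      _ = 16 * (7 * 9 ^ k * k) := by ring
      _ ≤ 16 ^ (k + 1) := by rw [pow_succ']; gcongr

theorem seven_mul_pow_le_pow_of_four_mul_le {n x : ℕ} (hx : 7 ≤ x) (hxn : 4 * x ≤ 3 * n) :
    7 * x ^ (2 * x + 1) ≤ n ^ (2 * x) := by
  refine Nat.le_of_mul_le_mul_left ?_ (pow_pos (by norm_num : 0 < 9) x)
  calc 9 ^ x * (7 * x ^ (2 * x + 1)) = 7 * 9 ^ x * x * x ^ (2 * x) := by ring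
    _ ≤ 16 ^ x * x ^ (2 * x) := by gcongr; exact seven_mul_nine_pow_mul_le_sixteen_pow hx
    _ = (4 * x) ^ (2 * x) := by rw [mul_pow, pow_mul 4]; norm_num
    _ ≤ (3 * n) ^ (2 * x) := by gcongr
    _ = 9 ^ x * n ^ (2 * x) := by rw [mul_pow, pow_mul 3]; norm_num

theorem pow_bound_of_not_mem_exceptionalPairs {n x : ℕ} (hx : 1 ≤ x) (hxn : 4 * x ≤ 3 * n)
    (hexc : (n, x) ∉ exceptionalPairs) :
    378 * x ^ (2 * x + 2) + 10 * n ^ (2 * x) < 60 * x * n ^ (2 * x) := by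
  rcases lt_or_ge x 7 with hsmall | hlarge
  · simp only [exceptionalPairs, Finset.mem_insert, Finset.mem_singleton, Prod.mk.injEq,
      not_or] at hexc
    have h₁ : (x + 2) ^ (2 * x) ≤ n ^ (2 * x) := Nat.pow_le_pow_left (by omega) _
    have h₂ : 4 ≤ x → (x + 3) ^ (2 * x) ≤ n ^ (2 * x) :=
      fun h ↦ Nat.pow_le_pow_left (by omega) _
    interval_cases x <;> norm_num at h₁ h₂ ⊢ <;> linarith
  · have h := seven_mul_pow_le_pow_of_four_mul_le hlarge hxn
    have hN : 0 < n ^ (2 * x) := pow_pos (by omega) _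
    calc 378 * x ^ (2 * x + 2) + 10 * n ^ (2 * x)
        = 54 * x * (7 * x ^ (2 * x + 1)) + 10 * n ^ (2 * x) := by ring
      _ ≤ 54 * x * n ^ (2 * x) + 10 * n ^ (2 * x) := by gcongr
      _ < 60 * x * n ^ (2 * x) := by nlinarith

theorem lt_mul_exp_neg_one_div_of_sq_lt {a x N : ℝ} (hx : 0 < x) (hN : 0 ≤ N)
    (h : 6 * x * a ^ 2 < (6 * x - 1) * N ^ 2) : a < N * exp (-(1 / (12 * x))) := by
  refine lt_of_pow_lt_pow_left₀ 2 (by positivity) ?_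
  have hexp : 1 - 1 / (6 * x) ≤ exp (-(1 / (12 * x))) ^ 2 := by
    rw [← exp_nat_mul]
    convert add_one_le_exp (-(1 / (6 * x))) using 2 <;> field_simp <;> ring
  calc a ^ 2 < N ^ 2 * (1 - 1 / (6 * x)) := by
        rw [show N ^ 2 * (1 - 1 / (6 * x)) = (6 * x - 1) * N ^ 2 / (6 * x) by field_simp,
          lt_div_iff₀ (by positivity)]
        linarith
    _ ≤ (N * exp (-(1 / (12 * x)))) ^ 2 := by rw [mul_pow]; gcongr

theorem stmt_9_general (n x : ℕ) (hx : 1 ≤ x) (hxn : 4 * x ≤ 3 * n)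
    (hexc : (n, x) ∉ ({(2, 1), (3, 2), (4, 3), (6, 4), (7, 5), (8, 6)} :
      Finset (ℕ × ℕ))) :
    Real.sqrt (2 * π) * ((x : ℝ)) ^ x * Real.sqrt x <
      ((n : ℝ)) ^ x * Real.exp (-(1 / (12 * (x : ℝ)))) := by
  have hkey : (378 : ℝ) * x ^ (2 * x + 2) + 10 * n ^ (2 * x) < 60 * x * n ^ (2 * x) := by
    exact_mod_cast pow_bound_of_not_mem_exceptionalPairs hx hxn hexc
  have hsq : (√(2 * π) * (x : ℝ) ^ x * √x) ^ 2 = 2 * π * x ^ (2 * x + 1) := by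
    rw [mul_pow, mul_pow, sq_sqrt (by positivity), sq_sqrt (by positivity)]; ring
  refine lt_mul_exp_neg_one_div_of_sq_lt (by positivity) (by positivity) ?_
  rw [hsq, ← pow_mul, mul_comm x 2]
  have hπ := mul_le_mul_of_nonneg_right pi_lt_d2.le (by positivity : (0 : ℝ) ≤ x ^ (2 * x + 2))
  rw [pow_succ] at hkey hπ
  linarith

/-- For integers `n, x ≥ 1` with `4x ≤ 3n` and `(n, x)` not among the
six exceptional pairs `(2,1), (3,2), (4,3), (6,4), (7,5), (8,6)`, one has
`n^x · e^(-1/(12x)) > √(2π) · x^x · √x` as real numbers. -/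
theorem stmt_9 (n x : ℕ) (hn : 1 ≤ n) (hx : 1 ≤ x) (hxn : 4 * x ≤ 3 * n)
    (hexc : (n, x) ∉ ({(2, 1), (3, 2), (4, 3), (6, 4), (7, 5), (8, 6)} :
      Finset (ℕ × ℕ))) :
    Real.sqrt (2 * π) * ((x : ℝ)) ^ x * Real.sqrt x <
      ((n : ℝ)) ^ x * Real.exp (-(1 / (12 * (x : ℝ)))) :=
  stmt_9_general n x hx hxn hexc
end

section
/- Let m ≥ 1 and l ≥ 1 be integers, let A ⊆ ℕ^m be finite with 0 ∈ A, and assume that for every coordinate i ∈ {1, …, m} there exists α ∈ A with α_i ≥ 1. Then min_J Béz(A^l; J) = ((lm)!/(m!)^l) · (min_I Béz(A; I))^l, where J ranges over all partitions of {1, …, lm} and I ranges over all partitions of {1, …, m}. -/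
/-!
A partition `J` of the variables of `A^l` cuts every block `{s} × Fin m` into a partition `J_s`
of the variables of `A`, and the degree of a class of `J` in `A^l` is the sum over `s` of the
degrees of its layers in `A`. Factoring the multinomial coefficient of `J` over the product index
set `blocks × classes` and bounding each class by the multinomial theorem gives
`Béz(A^l; J) ≥ ((lm)!/(m!)^l) · ∏_s Béz(A; J_s)`. Conversely, copying a minimising partition
of `A` into each block attains this bound.
-/

open Finset

namespace Nat

theorem multinomial_univ_comp_equiv {α β : Type*} [Fintype α] [Fintype β] (e : α ≃ β)
    (f : β → ℕ) : multinomial univ (f ∘ e) = multinomial univ f := by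
  simp only [multinomial, Function.comp_apply, Equiv.sum_comp,
    Equiv.prod_comp e fun b => (f b)!]

theorem multinomial_univ_const (l m : ℕ) :
    multinomial (univ : Finset (Fin l)) (fun _ => m) = (l * m)! / m ! ^ l := by
  simp [multinomial]

theorem multinomial_univ_prod {α β : Type*} [Fintype α] [Fintype β] (f : α × β → ℕ) :
    multinomial univ f =
      multinomial univ (fun a => ∑ b, f (a, b)) *
        ∏ a, multinomial univ (fun b => f (a, b)) := by
  refine Nat.eq_of_mul_eq_mul_left (prod_factorial_pos univ f) ?_
  calc (∏ p, (f p)!) * multinomial univ f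
      = (∑ p, f p)! := multinomial_spec _ _
    _ = (∏ a, (∑ b, f (a, b))!) * multinomial univ (fun a => ∑ b, f (a, b)) := by
        rw [multinomial_spec, Fintype.sum_prod_type]
    _ = (∏ a, ((∏ b, (f (a, b))!) * multinomial univ (fun b => f (a, b)))) *
          multinomial univ (fun a => ∑ b, f (a, b)) := by
        simp only [multinomial_spec]
    _ = (∏ p, (f p)!) * (multinomial univ (fun a => ∑ b, f (a, b)) *
          ∏ a, multinomial univ (fun b => f (a, b))) := by
        rw [prod_mul_distrib, Fintype.prod_prod_type]; ring

theorem multinomial_univ_mul_prod_pow_le {ι : Type*} [Fintype ι] (a d : ι → ℕ) :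
    multinomial univ a * ∏ i, d i ^ a i ≤ (∑ i, d i) ^ ∑ i, a i := by
  classical
  rw [sum_pow_eq_sum_piAntidiag univ d]
  exact single_le_sum (f := fun k => multinomial univ k * ∏ i, d i ^ k i)
    (fun _ _ => Nat.zero_le _) (by simp [mem_piAntidiag])

end Nat

theorem Finset.sup_piFinset_sum {ι α : Type*} [Fintype ι] [DecidableEq ι]
    {t : ι → Finset α} (ht : ∀ i, (t i).Nonempty) (g : ι → α → ℕ) :
    (Fintype.piFinset t).sup (fun f => ∑ i, g i (f i)) = ∑ i, (t i).sup (g i) := by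
  refine le_antisymm (Finset.sup_le fun f hf => ?_) ?_
  · exact sum_le_sum fun i _ => le_sup (Fintype.mem_piFinset.1 hf i)
  · choose x hx hxmax using fun i => exists_mem_eq_sup (t i) (ht i) (g i)
    calc ∑ i, (t i).sup (g i) = ∑ i, g i (x i) := sum_congr rfl fun i _ => hxmax i
      _ ≤ _ := le_sup (f := fun f => ∑ i, g i (f i)) (Fintype.mem_piFinset.2 hx)

section Layer

variable {σ V : Type*} [Fintype V] [DecidableEq σ] [DecidableEq V]

def layer (S : Finset (σ × V)) (s : σ) : Finset V :=
  univ.filter fun v => (s, v) ∈ S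

theorem sum_eq_sum_layer [Fintype σ] {M : Type*} [AddCommMonoid M] (S : Finset (σ × V))
    (f : σ × V → M) : ∑ p ∈ S, f p = ∑ s, ∑ v ∈ layer S s, f (s, v) :=
  sum_finset_product S univ (layer S) fun p => by simp [layer]

theorem card_eq_sum_card_layer [Fintype σ] (S : Finset (σ × V)) :
    #S = ∑ s, #(layer S s) := by
  simp only [card_eq_sum_ones, sum_eq_sum_layer S]

theorem layer_singleton_product (s s' : σ) (T : Finset V) :
    layer ({s} ×ˢ T) s' = if s' = s then T else ∅ := by
  ext v
  split_ifs with h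
  · simp [layer, h]
  · simp [layer, Ne.symm h]

theorem IsPartitionFam.layer {k : ℕ} {J : Fin k → Finset (σ × V)} (hJ : IsPartitionFam J)
    (s : σ) : IsPartitionFam fun j => layer (J j) s := by
  refine ⟨fun i j hij => disjoint_left.2 fun v hi hj => ?_, fun v => ?_⟩
  · exact disjoint_left.1 (hJ.1 i j hij) (mem_filter.1 hi).2 (mem_filter.1 hj).2
  · obtain ⟨j, hj⟩ := hJ.2 (s, v)
    exact ⟨j, mem_filter.2 ⟨mem_univ v, hj⟩⟩

end Layer

theorem IsPartitionFam.sum_card {V : Type*} [Fintype V] [DecidableEq V] {k : ℕ}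
    {I : Fin k → Finset V} (hI : IsPartitionFam I) : ∑ j, #(I j) = Fintype.card V := by
  rw [← card_biUnion fun i _ j _ hij => hI.1 i j hij, ← card_univ]
  congr 1
  exact eq_univ_of_forall fun v => by simpa using hI.2 v

section Bezout

variable {V : Type*} [Fintype V]

theorem minBez_le (A : Finset (V → ℕ)) {k : ℕ} {I : Fin k → Finset V}
    (hI : IsPartitionFam I) : minBez A ≤ bez A I :=
  Nat.sInf_le ⟨k, I, hI, rfl⟩

theorem exists_bez_eq_minBez (A : Finset (V → ℕ)) :
    ∃ (k : ℕ) (I : Fin k → Finset V), IsPartitionFam I ∧ bez A I = minBez A := by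
  change minBez A ∈ {b | ∃ (k : ℕ) (I : Fin k → Finset V), IsPartitionFam I ∧ bez A I = b}
  exact Nat.sInf_mem ⟨_, 1, fun _ => univ, ⟨fun i j hij => absurd (Subsingleton.elim i j) hij,
    fun v => ⟨0, mem_univ v⟩⟩, rfl⟩

theorem bez_comp_equiv {ι : Type*} [Fintype ι] {k : ℕ} (A : Finset (V → ℕ))
    (I : ι → Finset V) (e : ι ≃ Fin k) :
    bez A (I ∘ e.symm) =
      Nat.multinomial univ (fun i => #(I i)) *
        ∏ i, (A.sup fun α => ∑ v ∈ I i, α v) ^ #(I i) := by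
  rw [bez, ← Nat.multinomial_univ_comp_equiv e.symm,
    ← Equiv.prod_comp e.symm fun i => (A.sup fun α => ∑ v ∈ I i, α v) ^ #(I i)]
  rfl

variable [DecidableEq V]

theorem sup_powSupport_sum {A : Finset (V → ℕ)} (hA : A.Nonempty) {l : ℕ}
    (S : Finset (Fin l × V)) :
    (powSupport A l).sup (fun α => ∑ p ∈ S, α p) =
      ∑ s, A.sup fun α => ∑ v ∈ layer S s, α v := by
  rw [powSupport, sup_image, ← sup_piFinset_sum (fun _ => hA)]
  congr 1
  funext f
  exact sum_eq_sum_layer S _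

theorem exists_bez_powSupport_eq {A : Finset (V → ℕ)} (hA : A.Nonempty) (l : ℕ) {k : ℕ}
    {I : Fin k → Finset V} (hI : IsPartitionFam I) :
    ∃ (k' : ℕ) (J : Fin k' → Finset (Fin l × V)), IsPartitionFam J ∧
      bez (powSupport A l) J =
        Nat.multinomial univ (fun _ : Fin l => Fintype.card V) * bez A I ^ l := by
  let B : Fin l × Fin k → Finset (Fin l × V) := fun p => {p.1} ×ˢ I p.2
  let e : Fin l × Fin k ≃ Fin (l * k) := finProdFinEquiv
  refine ⟨l * k, B ∘ e.symm, ⟨fun t t' htt' => ?_, fun ⟨s, v⟩ => ?_⟩, ?_⟩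
  · obtain ⟨⟨s, j⟩, rfl⟩ := e.surjective t
    obtain ⟨⟨s', j'⟩, rfl⟩ := e.surjective t'
    simp only [B, Function.comp_apply, Equiv.symm_apply_apply, disjoint_product]
    by_cases hs : s = s'
    · subst hs
      exact .inr (hI.1 j j' fun h => htt' (by rw [h]))
    · exact .inl (disjoint_singleton.2 hs)
  · obtain ⟨j, hj⟩ := hI.2 v
    exact ⟨e (s, j), by simpa [B] using hj⟩
  · have hsup : ∀ p, (powSupport A l).sup (fun α => ∑ q ∈ B p, α q) =
        A.sup fun α => ∑ v ∈ I p.2, α v := fun p => by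
      simp only [B, sup_powSupport_sum hA, layer_singleton_product]
      rw [sum_eq_single p.1 (fun s _ hs => by simp [hs]) (by simp)]
      simp
    have hcard : ∀ p, #(B p) = #(I p.2) := fun p => by simp [B]
    rw [bez_comp_equiv, Nat.multinomial_univ_prod, Fintype.prod_prod_type]
    simp only [hsup, hcard, hI.sum_card, prod_const, card_univ, Fintype.card_fin, bez, mul_pow,
      mul_assoc]

theorem multinomial_mul_minBez_pow_le_bez {A : Finset (V → ℕ)} (hA : A.Nonempty) {l k : ℕ}
    {J : Fin k → Finset (Fin l × V)} (hJ : IsPartitionFam J) :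
    Nat.multinomial univ (fun _ : Fin l => Fintype.card V) * minBez A ^ l ≤
      bez (powSupport A l) J := by
  let a : Fin l × Fin k → ℕ := fun p => #(layer (J p.2) p.1)
  let d : Fin l × Fin k → ℕ := fun p => A.sup fun α => ∑ v ∈ layer (J p.2) p.1, α v
  let swap := Equiv.prodComm (Fin k) (Fin l)
  calc Nat.multinomial univ (fun _ : Fin l => Fintype.card V) * minBez A ^ l
      ≤ Nat.multinomial univ (fun _ : Fin l => Fintype.card V) *
          ∏ s, bez A fun j => layer (J j) s := by
        rw [← Fin.prod_const]
        gcongr with s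
        exact minBez_le A (hJ.layer s)
    _ = Nat.multinomial univ a * ∏ p, d p ^ a p := by
        rw [Nat.multinomial_univ_prod, Fintype.prod_prod_type]
        simp only [bez, a, d, (hJ.layer _).sum_card, prod_mul_distrib, mul_assoc]
    _ = Nat.multinomial univ (a ∘ swap) * ∏ p, d (swap p) ^ a (swap p) := by
        rw [Nat.multinomial_univ_comp_equiv, Equiv.prod_comp swap fun p => d p ^ a p]
    _ = Nat.multinomial univ (fun j => ∑ s, a (s, j)) *
          ∏ j, (Nat.multinomial univ (fun s => a (s, j)) * ∏ s, d (s, j) ^ a (s, j)) := by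
        rw [Nat.multinomial_univ_prod, Fintype.prod_prod_type, prod_mul_distrib, mul_assoc]
        rfl
    _ ≤ Nat.multinomial univ (fun j => ∑ s, a (s, j)) *
          ∏ j, (∑ s, d (s, j)) ^ ∑ s, a (s, j) := by
        gcongr with j
        exact Nat.multinomial_univ_mul_prod_pow_le _ _
    _ = bez (powSupport A l) J := by
        simp only [bez, sup_powSupport_sum hA, ← card_eq_sum_card_layer, a, d]

end Bezout

theorem stmt_10_general (m l : ℕ) (A : Finset (Fin m → ℕ))
    (h0 : (0 : Fin m → ℕ) ∈ A) :
    minBez (powSupport A l) =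
      ((l * m).factorial / m.factorial ^ l) * (minBez A) ^ l := by
  have hA : A.Nonempty := ⟨0, h0⟩
  obtain ⟨k, I, hI, hIA⟩ := exists_bez_eq_minBez A
  obtain ⟨k', J, hJ, hJA⟩ := exists_bez_eq_minBez (powSupport A l)
  obtain ⟨k'', J', hJ', hJ'A⟩ := exists_bez_powSupport_eq hA l hI
  rw [← Nat.multinomial_univ_const]
  refine le_antisymm ?_ ?_
  · calc minBez (powSupport A l) ≤ bez (powSupport A l) J' := minBez_le _ hJ'
      _ = _ := by rw [hJ'A, hIA, Fintype.card_fin]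
  · simpa only [hJA, Fintype.card_fin] using multinomial_mul_minBez_pow_le_bez hA hJ

/-- For `m, l ≥ 1` and a finite `A ⊆ ℕ^m` with `0 ∈ A` such that
every coordinate is positive somewhere on `A`, the minimal Bézout number of `A^l`
equals `((lm)!/(m!)^l)` times the `l`-th power of the minimal Bézout number of `A`. -/
theorem stmt_10 (m l : ℕ) (hm : 1 ≤ m) (hl : 1 ≤ l) (A : Finset (Fin m → ℕ))
    (h0 : (0 : Fin m → ℕ) ∈ A) (hcoord : ∀ i : Fin m, ∃ α ∈ A, 1 ≤ α i) :
    minBez (powSupport A l) =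
      ((l * m).factorial / m.factorial ^ l) * (minBez A) ^ l :=
  stmt_10_general m l A h0
end

section
/- Let G be a finite simple graph with n ≥ 1 vertices and let I = (I₁, I₂, I₃) be a partition of the vertices of H = G × K₃ with #I₁ = #I₂ = #I₃ = n which is not a proper 3-coloring of H (i.e. some class contains two adjacent vertices). Then Béz(A(H); I₁, I₂, I₃) ≥ 2^n · (3n)!/(n!)³. -/
open Finset

/-!
Since all classes have size `n`, the multinomial factor of `bez` is `(3n)!/(n!)³` and the
remaining factor is `∏ⱼ dⱼⁿ`. Every singleton is a clique, so `dⱼ ≥ 1` for each nonempty class;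
a class containing an edge `uv` has `dⱼ ≥ 2`, witnessed by the clique `{u, v}`. Hence
`∏ⱼ dⱼⁿ ≥ 2ⁿ`.
-/

section GraphSupport

variable {W : Type*} [Fintype W] (H : SimpleGraph W)

open Classical in
theorem indicator_mem_graphSupport {T : Finset W} (hT : T.card ≤ 3)
    (hclique : H.IsClique (T : Set W)) :
    (fun w => if w ∈ T then 1 else 0) ∈ graphSupport H :=
  Finset.mem_image.mpr ⟨T, Finset.mem_filter.mpr ⟨Finset.mem_univ _, hT, hclique⟩, rfl⟩

theorem card_le_sup_sum_graphSupport {S T : Finset W} (hTS : T ⊆ S) (hT : T.card ≤ 3)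
    (hclique : H.IsClique (T : Set W)) :
    T.card ≤ (graphSupport H).sup fun α => ∑ l ∈ S, α l := by
  classical
  have hsum : ∑ l ∈ S, (if l ∈ T then 1 else 0) = T.card := by
    rw [Finset.sum_boole, Finset.filter_mem_eq_inter, Finset.inter_eq_right.mpr hTS,
      Nat.cast_id]
  rw [← hsum]
  convert Finset.le_sup (f := fun α : W → ℕ => ∑ l ∈ S, α l)
    (indicator_mem_graphSupport H hT hclique)

theorem one_le_sup_sum_graphSupport {S : Finset W} (hS : S.Nonempty) :
    1 ≤ (graphSupport H).sup fun α => ∑ l ∈ S, α l := by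
  obtain ⟨v, hv⟩ := hS
  simpa using card_le_sup_sum_graphSupport H (T := {v}) (by simpa) (by simp) (by simp)

theorem two_le_sup_sum_graphSupport {S : Finset W} {u v : W} (hu : u ∈ S) (hv : v ∈ S)
    (hadj : H.Adj u v) :
    2 ≤ (graphSupport H).sup fun α => ∑ l ∈ S, α l := by
  classical
  have hpair := card_le_sup_sum_graphSupport H (S := S) (T := {u, v})
    (Finset.insert_subset hu (Finset.singleton_subset_iff.mpr hv))
    (Finset.card_le_two.trans (by norm_num))
    (by simpa using SimpleGraph.isClique_pair.mpr fun _ => hadj)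
  rwa [Finset.card_pair hadj.ne] at hpair

end GraphSupport

theorem bez_of_card_eq {W : Type*} [Fintype W] (A : Finset (W → ℕ)) {k n : ℕ}
    (I : Fin k → Finset W) (hcard : ∀ j, (I j).card = n) :
    bez A I = (k * n).factorial / n.factorial ^ k *
      ∏ j, (A.sup fun α => ∑ l ∈ I j, α l) ^ n := by
  simp only [bez, hcard, Nat.multinomial, Finset.sum_const, Finset.prod_const,
    Finset.card_univ, Fintype.card_fin, smul_eq_mul]

theorem two_pow_mul_le_bez_graphSupport {W : Type*} [Fintype W] (H : SimpleGraph W)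
    {k n : ℕ} (I : Fin k → Finset W) (hcard : ∀ j, (I j).card = n)
    (hproper : ¬ ProperFam H I) :
    2 ^ n * ((k * n).factorial / n.factorial ^ k) ≤ bez (graphSupport H) I := by
  obtain ⟨j₀, u, hu, v, hv, hadj⟩ : ∃ j, ∃ u ∈ I j, ∃ v ∈ I j, H.Adj u v := by
    simpa [ProperFam] using hproper
  have hnonempty : ∀ j, (I j).Nonempty := fun j =>
    Finset.card_pos.mp (hcard j ▸ hcard j₀ ▸ Finset.card_pos.mpr ⟨u, hu⟩)
  rw [bez_of_card_eq _ I hcard, mul_comm]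
  gcongr
  calc 2 ^ n ≤ ((graphSupport H).sup fun α => ∑ l ∈ I j₀, α l) ^ n :=
        Nat.pow_le_pow_left (two_le_sup_sum_graphSupport H hu hv hadj) n
    _ ≤ ∏ j, ((graphSupport H).sup fun α => ∑ l ∈ I j, α l) ^ n :=
        Finset.single_le_prod'
          (fun j _ => Nat.one_le_pow _ _ (one_le_sup_sum_graphSupport H (hnonempty j)))
          (Finset.mem_univ j₀)

theorem stmt_15_general {V : Type*} [Fintype V] (G : SimpleGraph V) (n : ℕ)
    (I : Fin 3 → Finset (V × Fin 3))
    (hcard : ∀ j, (I j).card = n)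
    (hproper : ¬ ProperFam (G.boxProd (SimpleGraph.completeGraph (Fin 3))) I) :
    2 ^ n * ((3 * n).factorial / n.factorial ^ 3) ≤
      bez (graphSupport (G.boxProd (SimpleGraph.completeGraph (Fin 3)))) I :=
  two_pow_mul_le_bez_graphSupport _ I hcard hproper

/-- If `(I₁, I₂, I₃)` is a partition of the vertices of `H = G □ K₃`
with `#I₁ = #I₂ = #I₃ = n` which is not a proper 3-coloring of `H`, then
`Béz(A(H); I₁, I₂, I₃) ≥ 2^n · (3n)!/(n!)³`. -/
theorem stmt_15 {V : Type*} [Fintype V] (G : SimpleGraph V) (n : ℕ)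
    (hn : Fintype.card V = n) (hn1 : 1 ≤ n)
    (I : Fin 3 → Finset (V × Fin 3)) (hpart : IsPartitionFam I)
    (hcard : ∀ j, (I j).card = n)
    (hproper : ¬ ProperFam (G.boxProd (SimpleGraph.completeGraph (Fin 3))) I) :
    2 ^ n * ((3 * n).factorial / n.factorial ^ 3) ≤
      bez (graphSupport (G.boxProd (SimpleGraph.completeGraph (Fin 3)))) I :=
  stmt_15_general G n I hcard hproper
end
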